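/- arXiv:2503.18645 — 2 statements merged into one kernel-verified Lean document; each statement's English description precedes it below -/
import Mathlib

section
/- Let X = (x_{ki}) be a p × n random matrix whose entries are independent real random variables, where for each k the entries x_{k1}, ..., x_{kn} are i.i.d. with a distribution absolutely continuous with respect to Lebesgue measure. Then, surely, the rank of the difference between the Kendall correlation matrix and the Hoeffding residual matrix satisfies rank(τ_n − H_n) ≤ 5n. -/
open MeasureTheory ProbabilityTheory Filter

noncomputable section

/-- The Kendall correlation matrix of a `p × n` data sample `X`. -/
def kendallMatrix {p n : ℕ} (X : Fin p → Fin n → ℝ) : Matrix (Fin p) (Fin p) ℝ :=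
  Matrix.of fun k l =>
    (2 / ((n : ℝ) * ((n : ℝ) - 1))) *
      ∑ i : Fin n, ∑ j : Fin n,
        if i < j then Real.sign (X k i - X k j) * Real.sign (X l i - X l j) else 0

/-- The Hoeffding residual `v̄_{k,(ij)} = sign(x_{ki}-x_{kj}) - E[sign|x_{ki}] - E[sign|x_{kj}]`. -/
def vbar {Ω : Type*} [MeasurableSpace Ω] (μ : Measure Ω) {p n : ℕ}
    (X : Fin p → Fin n → Ω → ℝ) (k : Fin p) (i j : Fin n) : Ω → ℝ :=
  fun ω => Real.sign (X k i ω - X k j ω)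
    - (μ[fun ω' => Real.sign (X k i ω' - X k j ω') |
        MeasurableSpace.comap (X k i) inferInstance]) ω
    - (μ[fun ω' => Real.sign (X k i ω' - X k j ω') |
        MeasurableSpace.comap (X k j) inferInstance]) ω

/-- The Hoeffding residual matrix `H_{kl} = (1/M) Σ_{i<j} v̄_{k,(ij)} v̄_{l,(ij)}`,
with `M = n(n-1)/2`. -/
def hoeffdingH {Ω : Type*} [MeasurableSpace Ω] (μ : Measure Ω) {p n : ℕ}
    (X : Fin p → Fin n → Ω → ℝ) (ω : Ω) : Matrix (Fin p) (Fin p) ℝ :=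
  Matrix.of fun k l =>
    (2 / ((n : ℝ) * ((n : ℝ) - 1))) *
      ∑ i : Fin n, ∑ j : Fin n, if i < j then vbar μ X k i j ω * vbar μ X l i j ω else 0


lemma measurable_realSign : Measurable Real.sign := by
  have h : Real.sign = fun r : ℝ => if r < 0 then (-1 : ℝ) else if 0 < r then 1 else 0 :=
    funext fun r => rfl
  rw [h]
  exact Measurable.ite (measurableSet_lt measurable_id measurable_const) measurable_const
    (Measurable.ite (measurableSet_lt measurable_const measurable_id) measurable_const
      measurable_const)

lemma integrable_sign_sub {Ω : Type*} [MeasurableSpace Ω] (μ : Measure Ω)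
    [IsProbabilityMeasure μ] {f g : Ω → ℝ} (hf : Measurable f) (hg : Measurable g) :
    Integrable (fun ω => Real.sign (f ω - g ω)) μ := by
  have hm : Measurable fun ω => Real.sign (f ω - g ω) := measurable_realSign.comp (hf.sub hg)
  refine (integrable_const (1 : ℝ)).mono' hm.aestronglyMeasurable
    (Filter.Eventually.of_forall fun ω => ?_)
  rcases Real.sign_apply_eq (f ω - g ω) with h | h | h <;> rw [h] <;> norm_num

lemma matrix_rank_add_le {p q : ℕ} (A B : Matrix (Fin p) (Fin q) ℝ) :
    (A + B).rank ≤ A.rank + B.rank := by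
  classical
  rw [Matrix.rank, Matrix.rank, Matrix.rank, Matrix.mulVecLin_add]
  have h : LinearMap.range (A.mulVecLin + B.mulVecLin) ≤
      LinearMap.range A.mulVecLin ⊔ LinearMap.range B.mulVecLin := by
    rintro x ⟨y, rfl⟩
    exact Submodule.mem_sup.2 ⟨A.mulVecLin y, ⟨y, rfl⟩, B.mulVecLin y, ⟨y, rfl⟩, rfl⟩
  exact (Submodule.finrank_mono h).trans
    (Submodule.finrank_add_le_finrank_add_finrank _ _)

lemma rank_vecMulVec_le_one {p q : ℕ} (w : Fin p → ℝ) (v : Fin q → ℝ) :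
    (Matrix.vecMulVec w v).rank ≤ 1 := by
  rw [Matrix.vecMulVec_eq (Fin 1)]
  exact (Matrix.rank_mul_le_left _ _).trans
    ((Matrix.rank_le_card_width _).trans (by simp))

lemma rank_sum_le {p : ℕ} {ι : Type*} (s : Finset ι) (f : ι → Matrix (Fin p) (Fin p) ℝ) :
    (∑ i ∈ s, f i).rank ≤ ∑ i ∈ s, (f i).rank := by
  classical
  induction s using Finset.cons_induction with
  | empty => simp
  | cons i s hi ih =>
    rw [Finset.sum_cons, Finset.sum_cons]
    exact (matrix_rank_add_le _ _).trans (by gcongr)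

lemma mk_congr {α β : Type*} [TopologicalSpace β] {m m0 : MeasurableSpace α} {μ : Measure α}
    {f g : α → β} (hf : AEStronglyMeasurable[m] f μ) (hg : AEStronglyMeasurable[m] g μ)
    (h : f = g) : hf.mk f = hg.mk g := by subst h; rfl


lemma rsign_eq_one_iff {x : ℝ} : Real.sign x = 1 ↔ 0 < x := by
  constructor
  · intro h
    rcases lt_trichotomy x 0 with hx | hx | hx
    · rw [Real.sign_of_neg hx] at h; norm_num at h
    · rw [hx, Real.sign_zero] at h; norm_num at h
    · exact hx
  · exact Real.sign_of_pos

lemma null_of_upward (ν : Measure ℝ) [NullSingletonClass ν]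
    (S : Set ℝ) (hup : ∀ x ∈ S, ∀ y, x ≤ y → y ∈ S) (hnull : ∀ x ∈ S, ν (Set.Ici x) = 0) :
    ν S = 0 := by
  have hcover : S ⊆ (⋃ q : ℚ, ⋃ (_ : (q : ℝ) ∈ S), Set.Ici (q : ℝ)) ∪
      {x | x ∈ S ∧ ∀ q : ℚ, (q : ℝ) ∈ S → x < q} := by
    intro x hx
    by_cases h : ∃ q : ℚ, (q : ℝ) ∈ S ∧ (q : ℝ) ≤ x
    · obtain ⟨q, hq, hqx⟩ := h
      exact Or.inl (Set.mem_iUnion.2 ⟨q, Set.mem_iUnion.2 ⟨hq, hqx⟩⟩)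
    · push_neg at h
      exact Or.inr ⟨hx, fun q hq => h q hq⟩
  refine measure_mono_null hcover (measure_union_null ?_ ?_)
  · exact measure_iUnion_null fun q => measure_iUnion_null fun hq => hnull _ hq
  · refine Set.Subsingleton.measure_zero ?_ ν
    intro x hx y hy
    by_contra hne
    rcases lt_or_gt_of_ne hne with hlt | hlt
    · obtain ⟨q, hq1, hq2⟩ := exists_rat_btwn hlt
      exact lt_asymm hq2 (hy.2 q (hup x hx.1 q hq1.le))
    · obtain ⟨q, hq1, hq2⟩ := exists_rat_btwn hlt
      exact lt_asymm hq2 (hx.2 q (hup y hy.1 q hq1.le))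

lemma null_of_downward (ν : Measure ℝ) [NullSingletonClass ν]
    (S : Set ℝ) (hdown : ∀ x ∈ S, ∀ y, y ≤ x → y ∈ S) (hnull : ∀ x ∈ S, ν (Set.Iio x) = 0) :
    ν S = 0 := by
  have hcover : S ⊆ (⋃ q : ℚ, ⋃ (_ : (q : ℝ) ∈ S), Set.Iio (q : ℝ)) ∪
      {x | x ∈ S ∧ ∀ q : ℚ, (q : ℝ) ∈ S → (q : ℝ) ≤ x} := by
    intro x hx
    by_cases h : ∃ q : ℚ, (q : ℝ) ∈ S ∧ x < (q : ℝ)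
    · obtain ⟨q, hq, hqx⟩ := h
      exact Or.inl (Set.mem_iUnion.2 ⟨q, Set.mem_iUnion.2 ⟨hq, hqx⟩⟩)
    · push_neg at h
      exact Or.inr ⟨hx, fun q hq => h q hq⟩
  refine measure_mono_null hcover (measure_union_null ?_ ?_)
  · exact measure_iUnion_null fun q => measure_iUnion_null fun hq => hnull _ hq
  · refine Set.Subsingleton.measure_zero ?_ ν
    intro x hx y hy
    by_contra hne
    rcases lt_or_gt_of_ne hne with hlt | hlt
    · obtain ⟨q, hq1, hq2⟩ := exists_rat_btwn hlt
      exact absurd (hx.2 q (hdown y hy.1 q hq2.le)) (not_le.2 hq1)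
    · obtain ⟨q, hq1, hq2⟩ := exists_rat_btwn hlt
      exact absurd (hy.2 q (hdown x hx.1 q hq2.le)) (not_le.2 hq1)

lemma not_stronglyMeasurable_sign_right {Ω : Type*} [MeasurableSpace Ω] {μ : Measure Ω}
    [IsProbabilityMeasure μ] {Y Z : Ω → ℝ}
    (hY : Measurable Y) (hZ : Measurable Z)
    (hind : IndepFun Y Z μ) (hid : μ.map Y = μ.map Z) (hac : μ.map Y ≪ volume) :
    ¬ StronglyMeasurable[MeasurableSpace.comap Y inferInstance]
      (fun ω => Real.sign (Y ω - Z ω)) := by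
  intro hSM
  set ν : Measure ℝ := μ.map Y with hν
  haveI hνprob : IsProbabilityMeasure ν := Measure.isProbabilityMeasure_map hY.aemeasurable
  haveI : NullSingletonClass ν := ⟨fun x => hac (measure_singleton x)⟩
  obtain ⟨A, hA, hApre⟩ := hSM.measurable (measurableSet_singleton (1 : ℝ))
  have hiff : ∀ ω, Y ω ∈ A ↔ Z ω < Y ω := by
    intro ω
    have : ω ∈ Y ⁻¹' A ↔ ω ∈ (fun ω => Real.sign (Y ω - Z ω)) ⁻¹' {1} := by rw [hApre]
    simpa [Set.mem_preimage, rsign_eq_one_iff, sub_pos] using this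
  have hjoint : μ.map (fun ω => (Y ω, Z ω)) = ν.prod ν := by
    rw [(ProbabilityTheory.indepFun_iff_map_prod_eq_prod_map_map hY.aemeasurable
      hZ.aemeasurable).mp hind, ← hid]
  set U : Set (ℝ × ℝ) := {q | q.2 < q.1} with hU
  have hUm : MeasurableSet U := measurableSet_lt measurable_snd measurable_fst
  have hprem : Measurable fun ω => (Y ω, Z ω) := hY.prodMk hZ
  have hd1m : MeasurableSet ((A ×ˢ (Set.univ : Set ℝ)) \ U) :=
    (hA.prod MeasurableSet.univ).diff hUm
  have hd2m : MeasurableSet (U \ (A ×ˢ (Set.univ : Set ℝ))) :=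
    hUm.diff (hA.prod MeasurableSet.univ)
  have hpre1 : (fun ω => (Y ω, Z ω)) ⁻¹' ((A ×ˢ Set.univ) \ U) = ∅ := by
    ext ω
    simp only [Set.mem_preimage, Set.mem_diff, Set.mem_prod, Set.mem_univ, and_true, hU,
      Set.mem_setOf_eq, Set.mem_empty_iff_false, iff_false, not_and, not_not]
    exact fun h => (hiff ω).1 h
  have hpre2 : (fun ω => (Y ω, Z ω)) ⁻¹' (U \ (A ×ˢ Set.univ)) = ∅ := by
    ext ω
    simp only [Set.mem_preimage, Set.mem_diff, Set.mem_prod, Set.mem_univ, and_true, hU,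
      Set.mem_setOf_eq, Set.mem_empty_iff_false, iff_false, not_and, not_not]
    exact fun h => (hiff ω).2 h
  have h1 : (ν.prod ν) ((A ×ˢ Set.univ) \ U) = 0 := by
    rw [← hjoint, Measure.map_apply hprem hd1m, hpre1, measure_empty]
  have h2 : (ν.prod ν) (U \ (A ×ˢ Set.univ)) = 0 := by
    rw [← hjoint, Measure.map_apply hprem hd2m, hpre2, measure_empty]
  rw [Measure.prod_apply hd1m] at h1
  rw [Measure.prod_apply hd2m] at h2
  have hslice1 : (fun x : ℝ => ν (Prod.mk x ⁻¹' ((A ×ˢ Set.univ) \ U)))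
      = A.indicator fun x => ν (Set.Ici x) := by
    funext x
    by_cases hx : x ∈ A
    · have hpre : Prod.mk x ⁻¹' ((A ×ˢ Set.univ) \ U) = Set.Ici x := by
        ext y; simp [hU, hx, Set.mem_Ici, not_lt]
      rw [hpre, Set.indicator_of_mem hx]
    · have hpre : Prod.mk x ⁻¹' ((A ×ˢ Set.univ) \ U) = ∅ := by
        ext y; simp [hU, hx]
      rw [hpre, Set.indicator_of_notMem hx, measure_empty]
  have hslice2 : (fun x : ℝ => ν (Prod.mk x ⁻¹' (U \ (A ×ˢ Set.univ))))
      = Aᶜ.indicator fun x => ν (Set.Iio x) := by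
    funext x
    by_cases hx : x ∈ A
    · have hpre : Prod.mk x ⁻¹' (U \ (A ×ˢ Set.univ)) = ∅ := by
        ext y; simp [hU, hx]
      rw [hpre, Set.indicator_of_notMem (by simpa using hx), measure_empty]
    · have hpre : Prod.mk x ⁻¹' (U \ (A ×ˢ Set.univ)) = Set.Iio x := by
        ext y; simp [hU, hx, Set.mem_Iio]
      rw [hpre, Set.indicator_of_mem (by simpa using hx)]
  rw [hslice1] at h1
  rw [hslice2] at h2
  have hmbl1 : Measurable (A.indicator fun x : ℝ => ν (Set.Ici x)) :=
    Measurable.indicator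
      (Antitone.measurable fun x y hxy => measure_mono (Set.Ici_subset_Ici.2 hxy)) hA
  have hmbl2 : Measurable (Aᶜ.indicator fun x : ℝ => ν (Set.Iio x)) :=
    Measurable.indicator
      (Monotone.measurable fun x y hxy => measure_mono (Set.Iio_subset_Iio hxy)) hA.compl
  have hae1 := (lintegral_eq_zero_iff hmbl1).mp h1
  have hae2 := (lintegral_eq_zero_iff hmbl2).mp h2
  have hc1 : ∀ᵐ x ∂ν, x ∉ {x : ℝ | ν (Set.Ici x) = 0} :=
    measure_eq_zero_iff_ae_notMem.mp
      (null_of_upward ν _ (fun x hx y hxy => measure_mono_null (Set.Ici_subset_Ici.2 hxy) hx)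
        (fun x hx => hx))
  have hc2 : ∀ᵐ x ∂ν, x ∉ {x : ℝ | ν (Set.Iio x) = 0} :=
    measure_eq_zero_iff_ae_notMem.mp
      (null_of_downward ν _ (fun x hx y hxy => measure_mono_null (Set.Iio_subset_Iio hxy) hx)
        (fun x hx => hx))
  have hfalse : ∀ᵐ x ∂ν, False := by
    filter_upwards [hae1, hae2, hc1, hc2] with x k1 k2 k3 k4
    by_cases hx : x ∈ A
    · exact k3 (by simpa [Set.indicator_of_mem hx] using k1)
    · exact k4 (by simpa [Set.indicator_of_mem (Set.mem_compl hx)] using k2)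
  rw [ae_iff] at hfalse
  simp at hfalse

lemma not_stronglyMeasurable_sign_left {Ω : Type*} [MeasurableSpace Ω] {μ : Measure Ω}
    [IsProbabilityMeasure μ] {Y Z : Ω → ℝ}
    (hY : Measurable Y) (hZ : Measurable Z)
    (hind : IndepFun Y Z μ) (hid : μ.map Z = μ.map Y) (hac : μ.map Z ≪ volume) :
    ¬ StronglyMeasurable[MeasurableSpace.comap Z inferInstance]
      (fun ω => Real.sign (Y ω - Z ω)) := by
  intro h
  have h2 : StronglyMeasurable[MeasurableSpace.comap Z inferInstance]
      (fun ω => Real.sign (Z ω - Y ω)) := by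
    have heq : (fun ω => Real.sign (Z ω - Y ω)) = fun ω => -Real.sign (Y ω - Z ω) := by
      funext ω
      rw [show Z ω - Y ω = -(Y ω - Z ω) by ring, Real.sign_neg]
    rw [heq]
    exact h.neg
  exact not_stronglyMeasurable_sign_right hZ hY hind.symm hid hac h2


lemma setIntegral_sign_congr_right {Ω : Type*} [MeasurableSpace Ω] {μ : Measure Ω}
    [IsProbabilityMeasure μ] {Y Z Z' : Ω → ℝ}
    (hY : Measurable Y) (hZ : Measurable Z) (hZ' : Measurable Z')
    (hind : IndepFun Y Z μ) (hind' : IndepFun Y Z' μ)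
    (hid : μ.map Z = μ.map Z') {s : Set Ω}
    (hs : MeasurableSet[MeasurableSpace.comap Y inferInstance] s) :
    ∫ ω in s, Real.sign (Y ω - Z ω) ∂μ = ∫ ω in s, Real.sign (Y ω - Z' ω) ∂μ := by
  obtain ⟨A, hA, rfl⟩ := hs
  set Φ : ℝ × ℝ → ℝ := fun q => Set.indicator A (fun _ => (1 : ℝ)) q.1 * Real.sign (q.1 - q.2)
    with hΦdef
  have hΦm : Measurable Φ :=
    ((measurable_const.indicator hA).comp measurable_fst).mul
      (measurable_realSign.comp (measurable_fst.sub measurable_snd))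
  have key : ∀ W : Ω → ℝ, Measurable W →
      ∫ ω in Y ⁻¹' A, Real.sign (Y ω - W ω) ∂μ
        = ∫ q, Φ q ∂(μ.map fun ω => (Y ω, W ω)) := by
    intro W hW
    rw [integral_map (hY.prodMk hW).aemeasurable hΦm.aestronglyMeasurable,
      ← integral_indicator (hY hA)]
    congr 1
    ext ω
    by_cases hω : Y ω ∈ A <;> simp [Φ, Set.indicator, hω]
  rw [key Z hZ, key Z' hZ',
    (ProbabilityTheory.indepFun_iff_map_prod_eq_prod_map_map hY.aemeasurable
      hZ.aemeasurable).mp hind,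
    (ProbabilityTheory.indepFun_iff_map_prod_eq_prod_map_map hY.aemeasurable
      hZ'.aemeasurable).mp hind', hid]

lemma setIntegral_sign_congr_left {Ω : Type*} [MeasurableSpace Ω] {μ : Measure Ω}
    [IsProbabilityMeasure μ] {Y Y' Z : Ω → ℝ}
    (hY : Measurable Y) (hY' : Measurable Y') (hZ : Measurable Z)
    (hind : IndepFun Y Z μ) (hind' : IndepFun Y' Z μ)
    (hid : μ.map Y = μ.map Y') {s : Set Ω}
    (hs : MeasurableSet[MeasurableSpace.comap Z inferInstance] s) :
    ∫ ω in s, Real.sign (Y ω - Z ω) ∂μ = ∫ ω in s, Real.sign (Y' ω - Z ω) ∂μ := by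
  obtain ⟨A, hA, rfl⟩ := hs
  set Φ : ℝ × ℝ → ℝ := fun q => Set.indicator A (fun _ => (1 : ℝ)) q.2 * Real.sign (q.1 - q.2)
    with hΦdef
  have hΦm : Measurable Φ :=
    ((measurable_const.indicator hA).comp measurable_snd).mul
      (measurable_realSign.comp (measurable_fst.sub measurable_snd))
  have key : ∀ W : Ω → ℝ, Measurable W →
      ∫ ω in Z ⁻¹' A, Real.sign (W ω - Z ω) ∂μ
        = ∫ q, Φ q ∂(μ.map fun ω => (W ω, Z ω)) := by
    intro W hW
    rw [integral_map (hW.prodMk hZ).aemeasurable hΦm.aestronglyMeasurable,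
      ← integral_indicator (hZ hA)]
    congr 1
    ext ω
    by_cases hω : Z ω ∈ A <;> simp [Φ, Set.indicator, hω]
  rw [key Y hY, key Y' hY',
    (ProbabilityTheory.indepFun_iff_map_prod_eq_prod_map_map hY.aemeasurable
      hZ.aemeasurable).mp hind,
    (ProbabilityTheory.indepFun_iff_map_prod_eq_prod_map_map hY'.aemeasurable
      hZ.aemeasurable).mp hind', hid]

lemma condexp_sign_congr_right {Ω : Type*} [MeasurableSpace Ω] {μ : Measure Ω}
    [IsProbabilityMeasure μ] {Y Z Z' : Ω → ℝ}
    (hY : Measurable Y) (hZ : Measurable Z) (hZ' : Measurable Z')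
    (hind : IndepFun Y Z μ) (hind' : IndepFun Y Z' μ)
    (hidZ : μ.map Y = μ.map Z) (hidZ' : μ.map Y = μ.map Z')
    (hac : μ.map Y ≪ volume) :
    μ[fun ω => Real.sign (Y ω - Z ω) | MeasurableSpace.comap Y inferInstance]
      = μ[fun ω => Real.sign (Y ω - Z' ω) | MeasurableSpace.comap Y inferInstance] := by
  have hm : MeasurableSpace.comap Y inferInstance ≤ _ := hY.comap_le
  haveI : SigmaFinite (μ.trim hm) := inferInstance
  have hfi : Integrable (fun ω => Real.sign (Y ω - Z ω)) μ := integrable_sign_sub μ hY hZ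
  have hgi : Integrable (fun ω => Real.sign (Y ω - Z' ω)) μ := integrable_sign_sub μ hY hZ'
  have hnf := not_stronglyMeasurable_sign_right hY hZ hind hidZ hac
  have hng := not_stronglyMeasurable_sign_right hY hZ' hind' hidZ' hac
  have hid : μ.map Z = μ.map Z' := hidZ.symm.trans hidZ'
  have hae : (μ[fun ω => Real.sign (Y ω - Z' ω) | MeasurableSpace.comap Y inferInstance])
      =ᵐ[μ] μ[fun ω => Real.sign (Y ω - Z ω) | MeasurableSpace.comap Y inferInstance] :=
    ae_eq_condExp_of_forall_setIntegral_eq hm hfi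
      (fun s _ _ => integrable_condExp.integrableOn)
      (fun s hs _ => by
        rw [setIntegral_condExp hm hgi hs]
        exact (setIntegral_sign_congr_right hY hZ hZ' hind hind' hid hs).symm)
      stronglyMeasurable_condExp.aestronglyMeasurable
  have hL1 : condExpL1 hm μ (fun ω => Real.sign (Y ω - Z ω))
      = condExpL1 hm μ (fun ω => Real.sign (Y ω - Z' ω)) :=
    Lp.ext ((condExp_ae_eq_condExpL1 hm _).symm.trans
      (hae.symm.trans (condExp_ae_eq_condExpL1 hm _)))
  rw [condExp_of_sigmaFinite hm, condExp_of_sigmaFinite hm, if_pos hfi, if_pos hgi,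
    if_neg hnf, if_neg hng]
  exact mk_congr _ _ (by rw [hL1])

lemma condexp_sign_congr_left {Ω : Type*} [MeasurableSpace Ω] {μ : Measure Ω}
    [IsProbabilityMeasure μ] {Y Y' Z : Ω → ℝ}
    (hY : Measurable Y) (hY' : Measurable Y') (hZ : Measurable Z)
    (hind : IndepFun Y Z μ) (hind' : IndepFun Y' Z μ)
    (hidY : μ.map Z = μ.map Y) (hidY' : μ.map Z = μ.map Y')
    (hac : μ.map Z ≪ volume) :
    μ[fun ω => Real.sign (Y ω - Z ω) | MeasurableSpace.comap Z inferInstance]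
      = μ[fun ω => Real.sign (Y' ω - Z ω) | MeasurableSpace.comap Z inferInstance] := by
  have hm : MeasurableSpace.comap Z inferInstance ≤ _ := hZ.comap_le
  haveI : SigmaFinite (μ.trim hm) := inferInstance
  have hfi : Integrable (fun ω => Real.sign (Y ω - Z ω)) μ := integrable_sign_sub μ hY hZ
  have hgi : Integrable (fun ω => Real.sign (Y' ω - Z ω)) μ := integrable_sign_sub μ hY' hZ
  have hnf := not_stronglyMeasurable_sign_left hY hZ hind hidY hac
  have hng := not_stronglyMeasurable_sign_left hY' hZ hind' hidY' hac
  have hid : μ.map Y = μ.map Y' := hidY.symm.trans hidY'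
  have hae : (μ[fun ω => Real.sign (Y' ω - Z ω) | MeasurableSpace.comap Z inferInstance])
      =ᵐ[μ] μ[fun ω => Real.sign (Y ω - Z ω) | MeasurableSpace.comap Z inferInstance] :=
    ae_eq_condExp_of_forall_setIntegral_eq hm hfi
      (fun s _ _ => integrable_condExp.integrableOn)
      (fun s hs _ => by
        rw [setIntegral_condExp hm hgi hs]
        exact (setIntegral_sign_congr_left hY hY' hZ hind hind' hid hs).symm)
      stronglyMeasurable_condExp.aestronglyMeasurable
  have hL1 : condExpL1 hm μ (fun ω => Real.sign (Y ω - Z ω))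
      = condExpL1 hm μ (fun ω => Real.sign (Y' ω - Z ω)) :=
    Lp.ext ((condExp_ae_eq_condExpL1 hm _).symm.trans
      (hae.symm.trans (condExp_ae_eq_condExpL1 hm _)))
  rw [condExp_of_sigmaFinite hm, condExp_of_sigmaFinite hm, if_pos hfi, if_pos hgi,
    if_neg hnf, if_neg hng]
  exact mk_congr _ _ (by rw [hL1])


/-- Surely, `rank(τ_n − H_n) ≤ 5n` for the Kendall matrix `τ_n` and the Hoeffding residual
matrix `H_n` of a `p × n` sample with independent entries, each row i.i.d. with an
absolutely continuous law. -/
theorem rank_kendall_sub_hoeffding_le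
    {Ω : Type*} [MeasurableSpace Ω] (μ : Measure Ω) [IsProbabilityMeasure μ]
    {p n : ℕ} (X : Fin p → Fin n → Ω → ℝ)
    (hmeas : ∀ k i, Measurable (X k i))
    (hindep : iIndepFun (m := fun _ : Fin p × Fin n => (inferInstance : MeasurableSpace ℝ))
      (fun ki => X ki.1 ki.2) μ)
    (hident : ∀ k i j, μ.map (X k i) = μ.map (X k j))
    (hac : ∀ k i, μ.map (X k i) ≪ volume) :
    ∀ ω : Ω, (kendallMatrix (fun k i => X k i ω) - hoeffdingH μ X ω).rank ≤ 5 * n := by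
  intro ω
  by_cases hn : n < 2
  · have hij : ∀ i j : Fin n, ¬ i < j := by
      intro i j hij
      have h1 : (i : ℕ) < (j : ℕ) := hij
      have h2 := j.isLt
      omega
    have hzero : kendallMatrix (fun k i => X k i ω) - hoeffdingH μ X ω = 0 := by
      ext k l
      simp [kendallMatrix, hoeffdingH, hij]
    rw [hzero, Matrix.rank_zero]
    exact Nat.zero_le _
  push_neg at hn
  have h0 : (0 : ℕ) < n := by omega
  have h1 : (1 : ℕ) < n := by omega
  set other : Fin n → Fin n := fun i => if i = ⟨0, h0⟩ then ⟨1, h1⟩ else ⟨0, h0⟩ with hother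
  have hother_ne : ∀ i, other i ≠ i := by
    intro i
    by_cases h : i = ⟨0, h0⟩
    · subst h
      simp only [hother, if_pos rfl]
      intro hcontra
      exact absurd (congrArg Fin.val hcontra) (by norm_num)
    · simp only [hother, if_neg h]
      exact fun hh => h hh.symm
  set a : Fin p → Fin n → ℝ := fun k i =>
    (μ[fun ω' => Real.sign (X k i ω' - X k (other i) ω') |
        MeasurableSpace.comap (X k i) inferInstance]) ω with ha_def
  set b : Fin p → Fin n → ℝ := fun k j =>
    (μ[fun ω' => Real.sign (X k (other j) ω' - X k j ω') |
        MeasurableSpace.comap (X k j) inferInstance]) ω with hb_def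
  have hIndep : ∀ (k : Fin p) {i j : Fin n}, i ≠ j → IndepFun (X k i) (X k j) μ := by
    intro k i j hne
    exact hindep.indepFun (show ((k, i) : Fin p × Fin n) ≠ (k, j) from
      fun h => hne (congrArg Prod.snd h))
  have ha : ∀ (k : Fin p) (i j : Fin n), i ≠ j →
      (μ[fun ω' => Real.sign (X k i ω' - X k j ω') |
        MeasurableSpace.comap (X k i) inferInstance]) ω = a k i := by
    intro k i j hne
    have heq := condexp_sign_congr_right (hmeas k i) (hmeas k j) (hmeas k (other i))
      (hIndep k hne) (hIndep k (Ne.symm (hother_ne i)))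
      (hident k i j) (hident k i (other i)) (hac k i)
    exact congrFun heq ω
  have hb : ∀ (k : Fin p) (i j : Fin n), i ≠ j →
      (μ[fun ω' => Real.sign (X k i ω' - X k j ω') |
        MeasurableSpace.comap (X k j) inferInstance]) ω = b k j := by
    intro k i j hne
    have heq := condexp_sign_congr_left (hmeas k i) (hmeas k (other j)) (hmeas k j)
      (hIndep k hne) (hIndep k (hother_ne j))
      (hident k j i) (hident k j (other j)) (hac k j)
    exact congrFun heq ω
  have hvbar : ∀ (k : Fin p) (i j : Fin n), i < j →
      vbar μ X k i j ω = Real.sign (X k i ω - X k j ω) - a k i - b k j := by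
    intro k i j hij
    have hne : i ≠ j := Fin.ne_of_lt hij
    simp only [vbar]
    rw [ha k i j hne, hb k i j hne]
  set c : ℝ := 2 / ((n : ℝ) * ((n : ℝ) - 1)) with hc
  set v : Fin p → Fin n → Fin n → ℝ := fun k i j => Real.sign (X k i ω - X k j ω) with hv
  set M1 : Fin n → Matrix (Fin p) (Fin p) ℝ := fun i =>
    Matrix.vecMulVec (fun k => c * ∑ j, if i < j then v k i j else 0) (fun l => a l i) with hM1
  set M2 : Fin n → Matrix (Fin p) (Fin p) ℝ := fun j =>
    Matrix.vecMulVec (fun k => c * ∑ i, if i < j then v k i j else 0) (fun l => b l j) with hM2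
  set M3 : Fin n → Matrix (Fin p) (Fin p) ℝ := fun i =>
    Matrix.vecMulVec (fun k => a k i)
      (fun l => c * ∑ j, if i < j then v l i j - a l i - b l j else 0) with hM3
  set M4 : Fin n → Matrix (Fin p) (Fin p) ℝ := fun j =>
    Matrix.vecMulVec (fun k => b k j)
      (fun l => c * ∑ i, if i < j then v l i j - a l i - b l j else 0) with hM4
  have heq : kendallMatrix (fun k i => X k i ω) - hoeffdingH μ X ω
      = (∑ i, M1 i) + (∑ j, M2 j) + (∑ i, M3 i) + (∑ j, M4 j) := by
    ext k l
    simp only [Matrix.sub_apply, Matrix.add_apply, Matrix.sum_apply, hM1, hM2, hM3, hM4,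
      Matrix.vecMulVec_apply, kendallMatrix, hoeffdingH, Matrix.of_apply]
    rw [show (∑ i : Fin n, ∑ j : Fin n, if i < j then vbar μ X k i j ω * vbar μ X l i j ω else 0)
        = ∑ i : Fin n, ∑ j : Fin n, if i < j then
            (v k i j - a k i - b k j) * (v l i j - a l i - b l j) else 0 from
      Finset.sum_congr rfl fun i _ => Finset.sum_congr rfl fun j _ => by
        by_cases h : i < j
        · rw [if_pos h, if_pos h, hvbar k i j h, hvbar l i j h]
        · rw [if_neg h, if_neg h]]
    have e1 : (∑ i : Fin n, (c * ∑ j : Fin n, if i < j then v k i j else 0) * a l i)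
        = ∑ i : Fin n, ∑ j : Fin n, if i < j then
            c * (v k i j * a l i) else 0 := by
      refine Finset.sum_congr rfl fun i _ => ?_
      rw [Finset.mul_sum, Finset.sum_mul]
      exact Finset.sum_congr rfl fun j _ => by split_ifs <;> ring
    have e2 : (∑ j : Fin n, (c * ∑ i : Fin n, if i < j then v k i j else 0) * b l j)
        = ∑ i : Fin n, ∑ j : Fin n, if i < j then
            c * (v k i j * b l j) else 0 := by
      rw [Finset.sum_comm]
      refine Finset.sum_congr rfl fun j _ => ?_
      rw [Finset.mul_sum, Finset.sum_mul]
      exact Finset.sum_congr rfl fun i _ => by split_ifs <;> ring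
    have e3 : (∑ i : Fin n, a k i * (c * ∑ j : Fin n, if i < j then
            v l i j - a l i - b l j else 0))
        = ∑ i : Fin n, ∑ j : Fin n, if i < j then
            c * (a k i * (v l i j - a l i - b l j)) else 0 := by
      refine Finset.sum_congr rfl fun i _ => ?_
      rw [Finset.mul_sum, Finset.mul_sum]
      exact Finset.sum_congr rfl fun j _ => by split_ifs <;> ring
    have e4 : (∑ j : Fin n, b k j * (c * ∑ i : Fin n, if i < j then
            v l i j - a l i - b l j else 0))
        = ∑ i : Fin n, ∑ j : Fin n, if i < j then
            c * (b k j * (v l i j - a l i - b l j)) else 0 := by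
      rw [Finset.sum_comm]
      refine Finset.sum_congr rfl fun j _ => ?_
      rw [Finset.mul_sum, Finset.mul_sum]
      exact Finset.sum_congr rfl fun i _ => by split_ifs <;> ring
    rw [e1, e2, e3, e4]
    rw [Finset.mul_sum, Finset.mul_sum, ← Finset.sum_sub_distrib,
      ← Finset.sum_add_distrib, ← Finset.sum_add_distrib, ← Finset.sum_add_distrib]
    refine Finset.sum_congr rfl fun i _ => ?_
    rw [Finset.mul_sum, Finset.mul_sum, ← Finset.sum_sub_distrib,
      ← Finset.sum_add_distrib, ← Finset.sum_add_distrib, ← Finset.sum_add_distrib]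
    refine Finset.sum_congr rfl fun j _ => ?_
    split_ifs <;> ring
  rw [heq]
  have hb1 : (∑ i : Fin n, M1 i).rank ≤ n :=
    (rank_sum_le _ _).trans (by
      calc (∑ i : Fin n, (M1 i).rank) ≤ ∑ _i : Fin n, 1 :=
            Finset.sum_le_sum fun i _ => rank_vecMulVec_le_one _ _
        _ = n := by simp)
  have hb2 : (∑ j : Fin n, M2 j).rank ≤ n :=
    (rank_sum_le _ _).trans (by
      calc (∑ j : Fin n, (M2 j).rank) ≤ ∑ _j : Fin n, 1 :=
            Finset.sum_le_sum fun j _ => rank_vecMulVec_le_one _ _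
        _ = n := by simp)
  have hb3 : (∑ i : Fin n, M3 i).rank ≤ n :=
    (rank_sum_le _ _).trans (by
      calc (∑ i : Fin n, (M3 i).rank) ≤ ∑ _i : Fin n, 1 :=
            Finset.sum_le_sum fun i _ => rank_vecMulVec_le_one _ _
        _ = n := by simp)
  have hb4 : (∑ j : Fin n, M4 j).rank ≤ n :=
    (rank_sum_le _ _).trans (by
      calc (∑ j : Fin n, (M4 j).rank) ≤ ∑ _j : Fin n, 1 :=
            Finset.sum_le_sum fun j _ => rank_vecMulVec_le_one _ _
        _ = n := by simp)
  calc ((∑ i, M1 i) + (∑ j, M2 j) + (∑ i, M3 i) + (∑ j, M4 j)).rank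
      ≤ ((∑ i, M1 i) + (∑ j, M2 j) + (∑ i, M3 i)).rank + (∑ j : Fin n, M4 j).rank :=
        matrix_rank_add_le _ _
    _ ≤ ((∑ i, M1 i) + (∑ j, M2 j)).rank + (∑ i : Fin n, M3 i).rank
          + (∑ j : Fin n, M4 j).rank := by
        gcongr
        exact matrix_rank_add_le _ _
    _ ≤ (∑ i : Fin n, M1 i).rank + (∑ j : Fin n, M2 j).rank + (∑ i : Fin n, M3 i).rank
          + (∑ j : Fin n, M4 j).rank := by
        gcongr
        exact matrix_rank_add_le _ _
    _ ≤ n + n + n + n := by gcongr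
    _ ≤ 5 * n := by omega


end
end

section
/- Let W be a p × p random real symmetric matrix and let W̃ be W with its first row and first column removed. Suppose the entries of an underlying data sample are such that W is a Wishart-type sample covariance matrix W = (1/n) Y Y^⊤ for a p × n matrix Y with i.i.d. standardized entries. Then for z ∈ ℂ with Im z ≠ 0, E[ Σ_{2 ≤ a,b ≤ p} W_{1a} [G_{W̃}(z)]_{ab} W_{b1} ] = −(p−1)/n + ((p−1)/n)·z·E[𝔤^{p−1}(z)], where G_{W̃}(z) = (z − W̃)^{−1} and 𝔤^{p−1}(z) = (1/(p−1)) tr G_{W̃}(z). -/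
open MeasureTheory ProbabilityTheory

noncomputable section

/-- The Wishart (sample covariance) matrix `W = (1/n) Y Yᵀ` of a `p × n` data sample. -/
def wishart {p n : ℕ} (Y : Fin p → Fin n → ℝ) : Matrix (Fin p) (Fin p) ℝ :=
  Matrix.of fun k l => (1 / (n : ℝ)) * ∑ i : Fin n, Y k i * Y l i

/-- The resolvent `(z − A)⁻¹` of a real matrix, over `ℂ`. -/
def cresolvent {m : ℕ} (A : Matrix (Fin m) (Fin m) ℝ) (z : ℂ) :
    Matrix (Fin m) (Fin m) ℂ :=
  (z • (1 : Matrix (Fin m) (Fin m) ℂ) - A.map (fun a => (a : ℂ)))⁻¹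

/-! Write `x` for the first row of `Y` and `X` for the other rows, so that `W̃ = X Xᵀ / n` and
`G = (z − W̃)⁻¹` depend on `X` only. The integrand is `n⁻² ∑ᵢⱼ xᵢ xⱼ (Xᵀ G X)ᵢⱼ`; as `x` is
independent of `X` with `E[xᵢ xⱼ] = δᵢⱼ`, its expectation is
`n⁻² E[tr (Xᵀ G X)] = n⁻² E[tr (G X Xᵀ)] = n⁻¹ E[tr (G W̃)] = n⁻¹ (z E[tr G] − p)`.
Integrability comes from `|Gₐᵦ| ≤ |Im z|⁻¹`, which follows from
`Im ⟨v, (z − A) v⟩ = Im z ‖v‖²` for Hermitian `A`. -/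

open Complex Matrix

namespace Matrix

variable {ι : Type*} [Fintype ι]

lemma star_dotProduct_self_eq_sum_norm_sq (v : ι → ℂ) :
    star v ⬝ᵥ v = ((∑ k, ‖v k‖ ^ 2 : ℝ) : ℂ) := by
  simp [dotProduct, Complex.conj_mul']

variable [DecidableEq ι] {A : Matrix ι ι ℂ}

lemma IsHermitian.im_star_dotProduct_smul_one_sub_mulVec (hA : A.IsHermitian) (z : ℂ)
    (v : ι → ℂ) : (star v ⬝ᵥ (z • 1 - A) *ᵥ v).im = z.im * ∑ k, ‖v k‖ ^ 2 := by
  have hreal := hA.im_star_dotProduct_mulVec_self v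
  simp only [RCLike.im_to_complex] at hreal
  rw [sub_mulVec, smul_mulVec, one_mulVec, dotProduct_sub, dotProduct_smul,
    star_dotProduct_self_eq_sum_norm_sq, sub_im, hreal, smul_eq_mul, mul_im, ofReal_im, ofReal_re]
  ring

lemma IsHermitian.isUnit_det_smul_one_sub (hA : A.IsHermitian) {z : ℂ} (hz : z.im ≠ 0) :
    IsUnit (z • 1 - A).det := by
  rw [isUnit_iff_ne_zero]
  intro h
  obtain ⟨v, hv, hAv⟩ := exists_mulVec_eq_zero_iff.mpr h
  have := hA.im_star_dotProduct_smul_one_sub_mulVec z v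
  rw [hAv, dotProduct_zero, zero_im, eq_comm, mul_eq_zero] at this
  refine hv (funext fun k => ?_)
  have hsum := this.resolve_left hz
  rw [Finset.sum_eq_zero_iff_of_nonneg fun _ _ => by positivity] at hsum
  simpa using hsum k (Finset.mem_univ k)

lemma IsHermitian.norm_inv_smul_one_sub_apply_le (hA : A.IsHermitian) {z : ℂ} (hz : z.im ≠ 0)
    (i j : ι) : ‖(z • 1 - A)⁻¹ i j‖ ≤ |z.im|⁻¹ := by
  set v : ι → ℂ := fun k => (z • 1 - A)⁻¹ k j
  set S := ∑ k, ‖v k‖ ^ 2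
  have hAv : (z • 1 - A) *ᵥ v = Pi.single j 1 := by
    ext k
    simpa [v, mul_apply, one_apply, Pi.single_apply, mulVec, dotProduct] using
      congr_fun₂ (mul_nonsing_inv _ (hA.isUnit_det_smul_one_sub hz)) k j
  have hnorm_le : ∀ k, ‖v k‖ ≤ √S := fun k =>
    Real.le_sqrt_of_sq_le
      (Finset.single_le_sum (f := fun k => ‖v k‖ ^ 2) (fun k _ => by positivity)
        (Finset.mem_univ k))
  -- testing the quadratic form against `v` gives `|Im z| S = |Im (v j)| ≤ √S`
  have hS : |z.im| * S ≤ √S := by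
    have := hA.im_star_dotProduct_smul_one_sub_mulVec z v
    rw [hAv, dotProduct_single, mul_one] at this
    calc |z.im| * S = |(v j).im| := by
          rw [← abs_of_nonneg (by positivity : 0 ≤ S), ← abs_mul, ← this]; simp
      _ ≤ √S := (abs_im_le_norm _).trans (hnorm_le j)
  have hsqrt : |z.im| * √S ≤ 1 := by
    rcases (Real.sqrt_nonneg S).eq_or_lt with h | h
    · rw [← h, mul_zero]; exact zero_le_one
    · refine le_of_mul_le_mul_right ?_ h
      rwa [mul_assoc, Real.mul_self_sqrt (by positivity), one_mul]
  calc ‖v i‖ ≤ √S := hnorm_le i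
    _ ≤ |z.im|⁻¹ := by rwa [← one_div, le_div_iff₀ (abs_pos.mpr hz), mul_comm]

end Matrix

lemma Matrix.IsSymm.isHermitian_map_ofReal {ι : Type*} {B : Matrix ι ι ℝ} (hB : B.IsSymm) :
    (B.map (fun a => (a : ℂ))).IsHermitian :=
  (isHermitian_iff_isSymm.mpr hB).map _ fun _ => (conj_ofReal _).symm

lemma Continuous.measurable_matrix_inv_apply {α ι : Type*} [TopologicalSpace α]
    [MeasurableSpace α] [OpensMeasurableSpace α] [Fintype ι] [DecidableEq ι]
    {M : α → Matrix ι ι ℂ} (hM : Continuous M) (i j : ι) :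
    Measurable fun x => (M x)⁻¹ i j := by
  have hinv : ∀ x, (M x)⁻¹ i j = (M x).det⁻¹ * (M x).adjugate i j := fun x => by
    rw [Matrix.inv_def, Ring.inverse_eq_inv', Matrix.smul_apply, smul_eq_mul]
  simp_rw [hinv]
  exact hM.matrix_det.measurable.inv.mul (hM.matrix_adjugate.matrix_elem i j).measurable

section Resolvent

variable {m : ℕ} {B : Matrix (Fin m) (Fin m) ℝ} {z : ℂ}

lemma cresolvent_mul_smul_one_sub (hB : B.IsSymm) (hz : z.im ≠ 0) :
    cresolvent B z * (z • 1 - B.map (fun a => (a : ℂ))) = 1 :=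
  nonsing_inv_mul _ (hB.isHermitian_map_ofReal.isUnit_det_smul_one_sub hz)

lemma norm_cresolvent_apply_le (hB : B.IsSymm) (hz : z.im ≠ 0) (a b : Fin m) :
    ‖cresolvent B z a b‖ ≤ |z.im|⁻¹ :=
  hB.isHermitian_map_ofReal.norm_inv_smul_one_sub_apply_le hz a b

lemma norm_trace_cresolvent_le (hB : B.IsSymm) (hz : z.im ≠ 0) :
    ‖trace (cresolvent B z)‖ ≤ m * |z.im|⁻¹ := by
  calc ‖trace (cresolvent B z)‖ ≤ ∑ a, ‖cresolvent B z a a‖ := norm_sum_le _ _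
    _ ≤ ∑ _a : Fin m, |z.im|⁻¹ := Finset.sum_le_sum fun a _ => norm_cresolvent_apply_le hB hz a a
    _ = m * |z.im|⁻¹ := by simp

lemma trace_cresolvent_mul (hB : B.IsSymm) (hz : z.im ≠ 0) :
    trace (cresolvent B z * B.map (fun a => (a : ℂ))) = z * trace (cresolvent B z) - m := by
  have h := cresolvent_mul_smul_one_sub hB hz
  rw [Matrix.mul_sub, Matrix.mul_smul, Matrix.mul_one] at h
  rw [← sub_sub_cancel (z • cresolvent B z) (cresolvent B z * _), h, trace_sub, trace_smul,
    trace_one, Fintype.card_fin, smul_eq_mul]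

end Resolvent

section Wishart

variable {p n : ℕ}

lemma wishart_isSymm (y : Fin p → Fin n → ℝ) : (wishart y).IsSymm := by
  ext a b
  simp only [wishart, transpose_apply, of_apply, mul_comm]

lemma measurable_cresolvent_wishart_apply (z : ℂ) (a b : Fin p) :
    Measurable fun y : Fin p → Fin n → ℝ => cresolvent (wishart y) z a b := by
  refine Continuous.measurable_matrix_inv_apply ?_ a b
  unfold wishart
  fun_prop

lemma measurable_trace_cresolvent_wishart (z : ℂ) :
    Measurable fun y : Fin p → Fin n → ℝ => trace (cresolvent (wishart y) z) :=
  Finset.measurable_sum _ fun a _ => measurable_cresolvent_wishart_apply z a a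

end Wishart

section Sandwich

variable {p n : ℕ}

def wishartSandwich (y : Fin p → Fin n → ℝ) (z : ℂ) : Matrix (Fin n) (Fin n) ℂ :=
  ((of y).map (fun a => (a : ℂ)))ᵀ * cresolvent (wishart y) z * (of y).map (fun a => (a : ℂ))

lemma wishartSandwich_apply (y : Fin p → Fin n → ℝ) (z : ℂ) (i j : Fin n) :
    wishartSandwich y z i j = ∑ a, ∑ b, (y a i * y b j) • cresolvent (wishart y) z a b := by
  simp only [wishartSandwich, mul_apply, transpose_apply, map_apply, of_apply, Finset.sum_mul,
    real_smul, ofReal_mul]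
  rw [Finset.sum_comm]
  exact Finset.sum_congr rfl fun _ _ => Finset.sum_congr rfl fun _ _ => by ring

lemma map_mul_transpose_map_eq_smul_wishart (hn : n ≠ 0) (y : Fin p → Fin n → ℝ) :
    (of y).map (fun a => (a : ℂ)) * ((of y).map (fun a => (a : ℂ)))ᵀ
      = (n : ℂ) • (wishart y).map (fun a => (a : ℂ)) := by
  ext a b
  simp only [mul_apply, transpose_apply, map_apply, of_apply, Matrix.smul_apply, wishart,
    smul_eq_mul]
  push_cast
  field_simp

lemma trace_wishartSandwich (hn : n ≠ 0) {z : ℂ} (hz : z.im ≠ 0) (y : Fin p → Fin n → ℝ) :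
    trace (wishartSandwich y z) = n * (z * trace (cresolvent (wishart y) z) - p) := by
  rw [wishartSandwich, trace_mul_cycle, map_mul_transpose_map_eq_smul_wishart hn, smul_mul,
    trace_smul, smul_eq_mul, trace_mul_comm, trace_cresolvent_mul (wishart_isSymm y) hz]

lemma measurable_wishartSandwich_apply (z : ℂ) (i j : Fin n) :
    Measurable fun y : Fin p → Fin n → ℝ => wishartSandwich y z i j := by
  simp_rw [wishartSandwich_apply]
  have := measurable_cresolvent_wishart_apply (p := p) (n := n) z
  fun_prop

end Sandwich

lemma sum_wishart_mul_mul_wishart {p n : ℕ} (Y : Fin (p + 1) → Fin n → ℝ)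
    (G : Fin p → Fin p → ℂ) :
    ∑ a : Fin p, ∑ b : Fin p, (wishart Y 0 a.succ : ℂ) * G a b * (wishart Y b.succ 0 : ℂ)
      = (n : ℂ)⁻¹ ^ 2 * ∑ i, ∑ j, (Y 0 i * Y 0 j) •
          ∑ a : Fin p, ∑ b : Fin p, (Y a.succ i * Y b.succ j) • G a b := by
  simp only [wishart, of_apply, real_smul]
  push_cast
  simp only [Finset.mul_sum, Finset.sum_mul]
  simp_rw [Finset.sum_comm (s := (Finset.univ : Finset (Fin p)))
    (t := (Finset.univ : Finset (Fin n)))]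
  rw [Finset.sum_comm]
  refine Finset.sum_congr rfl fun i _ => Finset.sum_congr rfl fun j _ =>
    Finset.sum_congr rfl fun a _ => Finset.sum_congr rfl fun b _ => by ring

lemma sum_wishart_mul_cresolvent_mul_wishart {p n : ℕ} (Y : Fin (p + 1) → Fin n → ℝ) (z : ℂ) :
    ∑ a : Fin p, ∑ b : Fin p, (wishart Y 0 a.succ : ℂ) *
        cresolvent (of fun a b : Fin p => wishart Y a.succ b.succ) z a b * (wishart Y b.succ 0 : ℂ)
      = (n : ℂ)⁻¹ ^ 2 * ∑ i, ∑ j, (Y 0 i * Y 0 j) • wishartSandwich (fun a => Y a.succ) z i j := by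
  simp only [wishartSandwich_apply]
  exact sum_wishart_mul_mul_wishart Y _

section Probability

variable {Ω : Type*} [MeasurableSpace Ω] {μ : Measure Ω}

namespace ProbabilityTheory

lemma iIndepFun.indepFun_of_disjoint_range {ι κ κ' β : Type*} [Fintype ι] [MeasurableSpace β]
    {X : ι → Ω → β} (hX : iIndepFun X μ) (hmeas : ∀ i, Measurable (X i)) {e : κ → ι}
    {e' : κ' → ι} (he : Disjoint (Set.range e) (Set.range e')) :
    IndepFun (fun ω k => X (e k) ω) (fun ω k => X (e' k) ω) μ := by
  classical
  set S := Finset.univ.filter (· ∈ Set.range e)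
  set T := Finset.univ.filter (· ∈ Set.range e')
  have hST : Disjoint S T := by
    simpa [S, T, Finset.disjoint_filter] using fun k k' h => he.ne_of_mem ⟨k, rfl⟩ ⟨k', rfl⟩ h.symm
  have hS : ∀ k, e k ∈ S := fun k => by simp [S]
  have hT : ∀ k, e' k ∈ T := fun k => by simp [T]
  exact (hX.indepFun_finset S T hST hmeas).comp
    (measurable_pi_lambda _ fun k => measurable_pi_apply ⟨e k, hS k⟩)
    (measurable_pi_lambda _ fun k => measurable_pi_apply ⟨e' k, hT k⟩)

lemma iIndepFun.indepFun_zero_succ {p n : ℕ} {Y : Fin (p + 1) → Fin n → Ω → ℝ}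
    (hindep : iIndepFun (fun ki : Fin (p + 1) × Fin n => Y ki.1 ki.2) μ)
    (hmeas : ∀ k i, Measurable (Y k i)) :
    IndepFun (fun ω i => Y 0 i ω) (fun ω (a : Fin p) i => Y a.succ i ω) μ :=
  (hindep.indepFun_of_disjoint_range (fun ki => hmeas ki.1 ki.2)
      (e := fun i => ((0 : Fin (p + 1)), i)) (e' := fun ai : Fin p × Fin n => (ai.1.succ, ai.2))
      (by simp [Set.disjoint_left, Fin.succ_ne_zero, eq_comm])).comp measurable_id
    (measurable_pi_lambda _ fun a => measurable_pi_lambda _ fun i => measurable_pi_apply (a, i))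

lemma integral_mul_eq_ite_of_iIndepFun {ι : Type*} [DecidableEq ι] {ν : Measure ℝ}
    {Z : ι → Ω → ℝ} (hmeas : ∀ i, Measurable (Z i)) (hindep : iIndepFun Z μ)
    (hident : ∀ i, μ.map (Z i) = ν) (hmean : ∫ x, x ∂ν = 0) (hvar : ∫ x, x ^ 2 ∂ν = 1)
    (i j : ι) : ∫ ω, Z i ω * Z j ω ∂μ = if i = j then 1 else 0 := by
  have hmoment : ∀ {f : ℝ → ℝ}, Measurable f → ∀ k, ∫ ω, f (Z k ω) ∂μ = ∫ x, f x ∂ν :=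
    fun hf k => by
      rw [← hident k, integral_map (hmeas k).aemeasurable hf.aestronglyMeasurable]
  split_ifs with hij
  · subst hij
    simp_rw [← sq]
    rw [← hvar]
    exact hmoment (f := fun x => x ^ 2) (by fun_prop) i
  · rw [(hindep.indepFun hij).integral_fun_mul_eq_mul_integral (hmeas i).aestronglyMeasurable
      (hmeas j).aestronglyMeasurable]
    have hZ : ∫ ω, Z i ω ∂μ = 0 := (hmoment measurable_id i).trans hmean
    simp [hZ]

lemma integral_sum_smul_eq_integral_trace {ι : Type*} [Fintype ι] [DecidableEq ι]
    {x : Ω → ι → ℝ} {M : Ω → Matrix ι ι ℂ}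
    (hindep : ∀ i j, IndepFun (fun ω => x ω i * x ω j) (fun ω => M ω i j) μ)
    (hx : ∀ i j, Integrable (fun ω => x ω i * x ω j) μ)
    (hcov : ∀ i j, ∫ ω, x ω i * x ω j ∂μ = if i = j then 1 else 0)
    (hM : ∀ i j, Integrable (fun ω => M ω i j) μ) :
    ∫ ω, ∑ i, ∑ j, (x ω i * x ω j) • M ω i j ∂μ = ∫ ω, trace (M ω) ∂μ := by
  have hterm : ∀ i j, ∫ ω, (x ω i * x ω j) • M ω i j ∂μ
      = if i = j then ∫ ω, M ω i j ∂μ else 0 := fun i j => by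
    rw [(hindep i j).integral_fun_smul_eq_smul_integral (hx i j).1 (hM i j).1, hcov]
    split_ifs <;> simp
  change _ = ∫ ω, ∑ i, M ω i i ∂μ
  rw [integral_finsetSum _ fun i _ =>
      integrable_finsetSum _ fun j _ => (hindep i j).integrable_smul (hx i j) (hM i j),
    integral_finsetSum _ fun i _ => hM i i]
  refine Finset.sum_congr rfl fun i _ => ?_
  rw [integral_finsetSum _ fun j _ => (hindep i j).integrable_smul (hx i j) (hM i j)]
  simp only [hterm, Finset.sum_ite_eq, Finset.mem_univ, if_true]

end ProbabilityTheory

lemma memLp_two_of_map_eq {ν : Measure ℝ} {X : Ω → ℝ} (hX : Measurable X) (hmap : μ.map X = ν) (hsq : Integrable (fun x => x ^ 2) ν) :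
    MemLp X 2 μ := by
  rw [← hmap, integrable_map_measure (by fun_prop) hX.aemeasurable] at hsq
  exact (memLp_two_iff_integrable_sq hX.aestronglyMeasurable).mpr hsq

lemma integrable_wishartSandwich_apply {p n : ℕ} {X : Ω → Fin p → Fin n → ℝ} (hmeas : Measurable X)
    (hX : ∀ a i, MemLp (fun ω => X ω a i) 2 μ) {z : ℂ} (hz : z.im ≠ 0) (i j : Fin n) :
    Integrable (fun ω => wishartSandwich (X ω) z i j) μ := by
  simp_rw [wishartSandwich_apply]
  refine integrable_finsetSum _ fun a _ => integrable_finsetSum _ fun b _ => ?_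
  exact ((hX a i).integrable_mul (hX b j)).smul_bdd _
    ((measurable_cresolvent_wishart_apply z a b).comp hmeas).aestronglyMeasurable
    (ae_of_all _ fun ω => norm_cresolvent_apply_le (wishart_isSymm (X ω)) hz a b)

end Probability

theorem wishart_resolvent_identity_general
    {Ω : Type*} [MeasurableSpace Ω] (μ : Measure Ω) [IsProbabilityMeasure μ]
    {p n : ℕ} (Y : Fin (p + 1) → Fin n → Ω → ℝ)
    (hmeas : ∀ k i, Measurable (Y k i))
    (hindep : iIndepFun
      (fun (ki : Fin (p + 1) × Fin n) => Y ki.1 ki.2) μ)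
    (ν : Measure ℝ)
    (hident : ∀ k i, μ.map (Y k i) = ν)
    (hmean : (∫ x, x ∂ν) = 0) (hvar : (∫ x, x ^ 2 ∂ν) = 1)
    (z : ℂ) (hz : z.im ≠ 0) :
    (∫ ω, (∑ a : Fin p, ∑ b : Fin p,
        (wishart (fun k i => Y k i ω) 0 a.succ : ℂ) *
          (cresolvent (Matrix.of fun a b : Fin p =>
            wishart (fun k i => Y k i ω) a.succ b.succ) z) a b *
          (wishart (fun k i => Y k i ω) b.succ 0 : ℂ)) ∂μ)
      = -(p : ℂ) / (n : ℂ)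
        + ((p : ℂ) / (n : ℂ)) * z *
          ∫ ω, ((p : ℂ))⁻¹ *
            Matrix.trace (cresolvent (Matrix.of fun a b : Fin p =>
              wishart (fun k i => Y k i ω) a.succ b.succ) z) ∂μ := by
  obtain rfl | hn := eq_or_ne n 0
  · simp [wishart]
  obtain rfl | hp := eq_or_ne p 0
  · simp
  set x : Ω → Fin n → ℝ := fun ω i => Y 0 i ω
  set X : Ω → Fin p → Fin n → ℝ := fun ω a i => Y a.succ i ω
  have hXmeas : Measurable X := by fun_prop
  have hL2 : ∀ k i, MemLp (Y k i) 2 μ := fun k i =>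
    memLp_two_of_map_eq (hmeas k i) (hident k i) (.of_integral_ne_zero (by simp [hvar]))
  have hxX : IndepFun x X μ := hindep.indepFun_zero_succ hmeas
  have hcov : ∀ i j, ∫ ω, x ω i * x ω j ∂μ = if i = j then 1 else 0 :=
    integral_mul_eq_ite_of_iIndepFun (fun i => hmeas 0 i)
      (hindep.precomp (Prod.mk_right_injective 0)) (fun i => hident 0 i) hmean hvar
  have hquad := integral_sum_smul_eq_integral_trace (M := fun ω => wishartSandwich (X ω) z)
    (fun i j => hxX.comp ((measurable_pi_apply i).mul (measurable_pi_apply j))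
      (measurable_wishartSandwich_apply z i j))
    (fun i j => (hL2 0 i).integrable_mul (hL2 0 j)) hcov
    (integrable_wishartSandwich_apply hXmeas (fun a i => hL2 _ _) hz)
  have htrace : Integrable (fun ω => trace (cresolvent (wishart (X ω)) z)) μ :=
    .of_bound ((measurable_trace_cresolvent_wishart z).comp hXmeas).aestronglyMeasurable _
      (ae_of_all _ fun ω => norm_trace_cresolvent_le (wishart_isSymm _) hz)
  calc _ = ∫ ω, (n : ℂ)⁻¹ ^ 2 * ∑ i, ∑ j, (x ω i * x ω j) • wishartSandwich (X ω) z i j ∂μ :=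
        integral_congr_ae (ae_of_all _ fun ω =>
          sum_wishart_mul_cresolvent_mul_wishart (fun k i => Y k i ω) z)
    _ = (n : ℂ)⁻¹ ^ 2 * ∫ ω, n * (z * trace (cresolvent (wishart (X ω)) z) - p) ∂μ := by
        rw [integral_const_mul, hquad]; simp_rw [trace_wishartSandwich hn hz]
    _ = _ := by
        rw [integral_const_mul, integral_sub (htrace.const_mul _) (integrable_const _),
          integral_const_mul, integral_const_mul, integral_const, probReal_univ, one_smul]
        change _ = _ + _ * (_ * ∫ ω, trace (cresolvent (wishart (X ω)) z) ∂μ)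
        field_simp
        ring

/-- **Key resolvent identity for Wishart matrices** (cavity step in the proof of the
Marčenko–Pastur theorem).  The data matrix `Y` has `p+1` rows of i.i.d. standardized
entries, `W = (1/n) Y Yᵀ`, `W̃` is `W` with its first row and column removed, and
`E[ Σ_{a,b ≥ 2} W_{1a} [G_{W̃}(z)]_{ab} W_{b1} ] = −p/n + (p/n)·z·E[𝔤^{p}(z)]`. -/
theorem wishart_resolvent_identity
    {Ω : Type*} [MeasurableSpace Ω] (μ : Measure Ω) [IsProbabilityMeasure μ]
    {p n : ℕ} (Y : Fin (p + 1) → Fin n → Ω → ℝ)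
    (hmeas : ∀ k i, Measurable (Y k i))
    (hindep : iIndepFun
      (fun (ki : Fin (p + 1) × Fin n) => Y ki.1 ki.2) μ)
    (ν : Measure ℝ) [IsProbabilityMeasure ν]
    (hident : ∀ k i, μ.map (Y k i) = ν)
    (hmean : (∫ x, x ∂ν) = 0) (hvar : (∫ x, x ^ 2 ∂ν) = 1)
    (z : ℂ) (hz : z.im ≠ 0) :
    (∫ ω, (∑ a : Fin p, ∑ b : Fin p,
        (wishart (fun k i => Y k i ω) 0 a.succ : ℂ) *
          (cresolvent (Matrix.of fun a b : Fin p =>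
            wishart (fun k i => Y k i ω) a.succ b.succ) z) a b *
          (wishart (fun k i => Y k i ω) b.succ 0 : ℂ)) ∂μ)
      = -(p : ℂ) / (n : ℂ)
        + ((p : ℂ) / (n : ℂ)) * z *
          ∫ ω, ((p : ℂ))⁻¹ *
            Matrix.trace (cresolvent (Matrix.of fun a b : Fin p =>
              wishart (fun k i => Y k i ω) a.succ b.succ) z) ∂μ :=
  wishart_resolvent_identity_general μ Y hmeas hindep ν hident hmean hvar z hz

end
end
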